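/- For every natural number n ≥ 1, the polynomial X_n(a) = 2^{2n-1}·(a+1/2)_n - binom(2n-1, n-1)·(a)_n, where (y)_n is the Pochhammer symbol, satisfies: X_n(-n) = 0; and for every integer k with 1 ≤ k ≤ n-1, X_n(-k) = (-1)^k · 2^{2n-1} · (1/2)_k · (1/2)_{n-k} and the symmetry X_n(k-n) = (-1)^n · X_n(-k). -/
import Mathlib


open Finset

/-- The Pochhammer symbol (rising factorial) `(y)_n = y (y+1) ⋯ (y+n-1)`. -/
noncomputable def poch (y : ℝ) (n : ℕ) : ℝ := ∏ k ∈ Finset.range n, (y + k)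

/-- The polynomial `X_n(a) = 2^{2n-1} (a+1/2)_n - C(2n-1, n-1) (a)_n`. -/
noncomputable def Xpoly (n : ℕ) (a : ℝ) : ℝ :=
  2 ^ (2 * n - 1) * poch (a + 1 / 2) n - (((2 * n - 1).choose (n - 1)) : ℝ) * poch a n

lemma poch_zero (y : ℝ) : poch y 0 = 1 := by simp [poch]

lemma poch_succ (y : ℝ) (n : ℕ) : poch y (n + 1) = poch y n * (y + n) := by
  simp [poch, Finset.prod_range_succ]

lemma poch_succ' (y : ℝ) (n : ℕ) : poch y (n + 1) = y * poch (y + 1) n := by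
  rw [poch, Finset.prod_range_succ', poch]
  simp only [Nat.cast_zero, add_zero, Nat.cast_add, Nat.cast_one]
  rw [mul_comm]
  congr 1
  apply Finset.prod_congr rfl
  intro x _
  ring

lemma poch_add (y : ℝ) (a b : ℕ) : poch y (a + b) = poch y a * poch (y + a) b := by
  rw [poch, Finset.prod_range_add, poch, poch]
  congr 1
  apply Finset.prod_congr rfl
  intro x _
  push_cast
  ring

lemma poch_reflect (y : ℝ) : ∀ n : ℕ, poch (-y - n + 1) n = (-1) ^ n * poch y n := by
  intro n
  induction n with
  | zero => simp [poch_zero]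
  | succ n ih =>
    have h1 : (-y - ((n : ℝ) + 1) + 1 : ℝ) = (-y - n) := by ring
    push_cast
    rw [h1, poch_succ', poch_succ]
    have h2 : (-y - (n:ℝ)) + 1 = -y - n + 1 := by ring
    rw [h2, ih]
    push_cast
    ring

lemma poch_one_fac (n : ℕ) : poch 1 n = ((Nat.factorial n : ℕ) : ℝ) := by
  induction n with
  | zero => simp [poch_zero]
  | succ n ih => rw [poch_succ, ih, Nat.factorial_succ]; push_cast; ring

lemma poch_half_fac (n : ℕ) : (4:ℝ) ^ n * poch (1/2) n * ((Nat.factorial n : ℕ) : ℝ) = ((Nat.factorial (2*n)) : ℝ) := by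
  induction n with
  | zero => simp [poch_zero]
  | succ n ih =>
    have e1 : 2*(n+1) = (2*n+1)+1 := by ring
    rw [poch_succ, Nat.factorial_succ, e1, Nat.factorial_succ, Nat.factorial_succ]
    push_cast
    push_cast at ih
    linear_combination (4*(1/2+(n:ℝ))*((n:ℝ)+1)) * ih

lemma poch_neg_nat (k n : ℕ) (h : k < n) : poch (-(k:ℝ)) n = 0 := by
  apply Finset.prod_eq_zero (Finset.mem_range.mpr h)
  simp

lemma choose_half (m : ℕ) : (2*(m+1)).choose (m+1) = 2 * (2*m+1).choose m := by
  have e1 : 2*(m+1) = (2*m+1)+1 := by ring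
  rw [e1, Nat.choose_succ_succ]
  have h := Nat.choose_symm (n := 2*m+1) (k := m+1) (by omega)
  rw [show (2*m+1) - (m+1) = m from by omega] at h
  simp only [Nat.succ_eq_add_one] at *
  omega

lemma key_id (m : ℕ) :
    (2:ℝ) ^ (2*m+1) * poch (1/2) (m+1) = (((2*m+1).choose m : ℕ) : ℝ) * ((Nat.factorial (m+1)) : ℝ) := by
  have h7 := poch_half_fac (m+1)
  have hc := Nat.choose_mul_factorial_mul_factorial (n := 2*(m+1)) (k := m+1) (by omega)
  rw [show 2*(m+1) - (m+1) = m+1 from by omega] at hc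
  have h8 := choose_half m
  have h4 : (4:ℝ)^(m+1) = 2 * 2^(2*m+1) := by
    rw [show (4:ℝ) = 2^2 from by norm_num, ← pow_mul, show 2*(m+1) = (2*m+1)+1 from by ring,
      pow_succ]
    ring
  have hf : ((Nat.factorial (m+1)) : ℝ) ≠ 0 := Nat.cast_ne_zero.mpr (Nat.factorial_ne_zero _)
  have key : 2 * ((2:ℝ) ^ (2*m+1) * poch (1/2) (m+1)) * ((Nat.factorial (m+1)) : ℝ)
      = 2 * ((((2*m+1).choose m : ℕ) : ℝ) * ((Nat.factorial (m+1)) : ℝ)) * ((Nat.factorial (m+1)) : ℝ) := by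
    have hc' : (((2*(m+1)).choose (m+1) : ℕ) : ℝ) * ((Nat.factorial (m+1)) : ℝ) * ((Nat.factorial (m+1)) : ℝ)
        = ((Nat.factorial (2*(m+1))) : ℝ) := by exact_mod_cast congrArg (Nat.cast : ℕ → ℝ) hc
    have h8' : (((2*(m+1)).choose (m+1) : ℕ) : ℝ) = 2 * (((2*m+1).choose m : ℕ) : ℝ) := by
      exact_mod_cast congrArg (Nat.cast : ℕ → ℝ) h8
    linear_combination h7 - hc' + ((Nat.factorial (m+1)) : ℝ) * ((Nat.factorial (m+1)) : ℝ) * h8'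
      - poch (1/2) (m+1) * ((Nat.factorial (m+1)) : ℝ) * h4
  have := mul_right_cancel₀ hf key
  linarith

theorem Xpoly_special_values (n : ℕ) (hn : 1 ≤ n) :
    Xpoly n (-(n : ℝ)) = 0 ∧
    ∀ k : ℕ, 1 ≤ k → k ≤ n - 1 →
      Xpoly n (-(k : ℝ)) = (-1) ^ k * 2 ^ (2 * n - 1) * poch (1 / 2) k * poch (1 / 2) (n - k) ∧
      Xpoly n ((k : ℝ) - (n : ℝ)) = (-1) ^ n * Xpoly n (-(k : ℝ)) := by
  obtain ⟨m, rfl⟩ : ∃ m, n = m + 1 := ⟨n - 1, by omega⟩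
  constructor
  · rw [Xpoly, show (-(((m:ℕ)+1 : ℕ) : ℝ) + 1/2) = -(1/2) - ((m+1 : ℕ) : ℝ) + 1 from by
      push_cast; ring, poch_reflect,
      show (-(((m:ℕ)+1 : ℕ) : ℝ)) = -(1:ℝ) - ((m+1 : ℕ) : ℝ) + 1 from by push_cast; ring,
      poch_reflect, poch_one_fac,
      show 2*(m+1)-1 = 2*m+1 from by omega, show (m+1)-1 = m from by omega]
    linear_combination ((-1:ℝ)^(m+1)) * key_id m
  · intro k hk1 hk2
    have hkm : k ≤ m := by omega
    have hz : poch (-(k:ℝ)) (m+1) = 0 := poch_neg_nat k (m+1) (by omega)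
    have hmain : poch (-(k:ℝ) + 1/2) (m+1)
        = (-1)^k * poch (1/2) k * poch (1/2) (m+1-k) := by
      have e : k + (m+1-k) = m+1 := by omega
      conv_lhs => rw [← e, poch_add]
      rw [show ((-(k:ℝ)+1/2) + (k:ℝ)) = 1/2 from by ring,
        show (-(k:ℝ)+1/2 : ℝ) = -(1/2) - (k:ℝ) + 1 from by ring, poch_reflect]
    constructor
    · rw [Xpoly, hz, mul_zero, sub_zero, hmain]
      ring
    · have hz2 : poch ((k:ℝ) - ((m+1 : ℕ) : ℝ)) (m+1) = 0 := by
        have : ((k:ℝ) - ((m+1 : ℕ) : ℝ)) = -(((m+1-k : ℕ)) : ℝ) := by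
          rw [Nat.cast_sub (by omega : k ≤ m+1)]; push_cast; ring
        rw [this]
        exact poch_neg_nat (m+1-k) (m+1) (by omega)
      rw [Xpoly, Xpoly, hz, hz2,
        show ((k:ℝ) - ((m+1 : ℕ) : ℝ) + 1/2) = -(-(k:ℝ)+1/2) - ((m+1 : ℕ) : ℝ) + 1 from by
          push_cast; ring, poch_reflect]
      push_cast
      ring
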